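/- Let (X,T) be a topological dynamical system and μ ∈ M(X,T). Then (X,B,μ,T) is rigid if and only if there exists a strictly increasing sequence A of natural numbers such that (X,T) is μ-A-equicontinuous. -/

import Mathlib

/-!
Both sides are equivalent to `T^[t k] → id` in measure along a strictly increasing sequence `t`.
Rigidity gives this by testing it on the functions `dist · q`, finitely many of which control
`dist (T^[t k] x) x` on a compact space. Conversely, convergence in measure gives
`f ∘ T^[t k] → f` in `L²` for continuous `f` (Vitali), hence for all `f` by density, composition
with `T^[t k]` being an isometry.

From convergence in measure, a subsequence converges a.e., hence (Egorov and inner regularity)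
uniformly to the identity on compact sets of measure close to one, and a uniform limit of
uniformly continuous maps is uniformly equicontinuous. Conversely, on a compact set `K` where the
`T^[a n]` are equicontinuous, a compactness argument gives `n₀ < n` with `T^[a n]` uniformly close
to `T^[a n₀]` on `K`; then `T^[a n - a n₀]` moves the points of `T^[a n₀] '' K`, a set of measure
`μ K` by invariance, very little.
-/

open MeasureTheory Filter Topology Set
open scoped ENNReal NNReal Uniformity

theorem Metric.uniformEquicontinuousOn_iff {ι β α : Type*} [PseudoMetricSpace β]
    [PseudoMetricSpace α] {F : ι → β → α} {S : Set β} :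
    UniformEquicontinuousOn F S ↔ ∀ ε > 0, ∃ δ > 0,
      ∀ x ∈ S, ∀ y ∈ S, dist x y < δ → ∀ i, dist (F i x) (F i y) < ε := by
  rw [(uniformity_basis_dist.inf_principal _).uniformEquicontinuousOn_iff uniformity_basis_dist]
  simp only [mem_inter_iff, mem_ofPred_eq, mem_prod]
  exact forall₂_congr fun ε _ => exists_congr fun δ => and_congr_right fun _ =>
    ⟨fun h x hx y hy hxy => h x y ⟨hxy, hx, hy⟩, fun h x y ⟨hxy, hx, hy⟩ => h x hx y hy hxy⟩

theorem TendstoUniformlyOn.uniformEquicontinuousOn {β α : Type*} [UniformSpace β]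
    [UniformSpace α] {F : ℕ → β → α} {G : β → α} {S : Set β}
    (hF : ∀ n, UniformContinuousOn (F n) S) (hG : UniformContinuousOn G S)
    (h : TendstoUniformlyOn F G atTop S) : UniformEquicontinuousOn F S := by
  intro U hU
  obtain ⟨V, hV, hVsymm, hVU⟩ := comp_comp_symm_mem_uniformity_sets hU
  obtain ⟨N, hN⟩ := eventually_atTop.1 (h V hV)
  have hsmall : ∀ᶠ xy in 𝓤 β ⊓ 𝓟 (S ×ˢ S), ∀ i < N, (F i xy.1, F i xy.2) ∈ U :=
    (finite_lt_nat N).eventually_all.2 fun i _ => hF i hU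
  filter_upwards [hsmall, hG hV, mem_inf_of_right (mem_principal_self _)]
    with ⟨x, y⟩ hsmall hGxy ⟨hx, hy⟩ i
  rcases lt_or_ge i N with hi | hi
  · exact hsmall i hi
  · exact hVU <| SetRel.prodMk_mem_comp
      (SetRel.prodMk_mem_comp (SetRel.symm V (hN i hi x hx)) hGxy) (hN i hi y hy)

theorem UniformEquicontinuousOn.exists_frequently_dist_lt {β Y : Type*} [PseudoMetricSpace β]
    [PseudoMetricSpace Y] [CompactSpace Y] {F : ℕ → β → Y} {K : Set β}
    (hF : UniformEquicontinuousOn F K) (hK : IsCompact K) {ε : ℝ} (hε : 0 < ε) :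
    ∃ n₀, ∃ᶠ n in atTop, ∀ x ∈ K, dist (F n x) (F n₀ x) < ε := by
  obtain ⟨δ, hδ, hFδ⟩ := Metric.uniformEquicontinuousOn_iff.1 hF (ε / 3) (by positivity)
  obtain ⟨J, hJK, hJfin, hKJ⟩ := hK.finite_cover_balls hδ
  have := hJfin.fintype
  -- the finitely many orbits `n ↦ F n j`, `j ∈ J`, have a convergent subsequence
  obtain ⟨_, _, φ, hφ, hlim⟩ := isCompact_univ.tendsto_subseq
    (x := fun n (j : J) => F n j) fun _ => mem_univ _
  obtain ⟨N, hN⟩ := Metric.cauchySeq_iff'.1 (Tendsto.cauchySeq hlim) (ε / 3) (by positivity)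
  refine ⟨φ N, frequently_atTop.2 fun M => ⟨φ (max M N), (le_max_left M N).trans (hφ.id_le _),
    fun x hx => ?_⟩⟩
  obtain ⟨j, hj, hxj⟩ := mem_iUnion₂.1 (hKJ hx)
  have h₁ := hFδ x hx j (hJK hj) hxj (φ (max M N))
  have h₂ := (dist_le_pi_dist _ _ ⟨j, hj⟩).trans_lt (hN (max M N) (le_max_right M N))
  have h₃ := hFδ x hx j (hJK hj) hxj (φ N)
  calc dist (F (φ (max M N)) x) (F (φ N) x)
      ≤ dist (F (φ (max M N)) x) (F (φ (max M N)) j) + dist (F (φ (max M N)) j) (F (φ N) j)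
        + dist (F (φ N) j) (F (φ N) x) := dist_triangle4 _ _ _ _
    _ < ε := by rw [dist_comm (F (φ N) j)]; simp only [Function.comp] at h₂; linarith

section ConvergenceInMeasure

variable {ι α E : Type*} [MeasurableSpace α] {μ : Measure α}

theorem UniformContinuous.comp_tendstoInMeasure {F : Type*} [PseudoMetricSpace E]
    [PseudoMetricSpace F] {φ : E → F} (hφ : UniformContinuous φ) {l : Filter ι}
    {f : ι → α → E} {g : α → E} (h : TendstoInMeasure μ f l g) :
    TendstoInMeasure μ (fun i x => φ (f i x)) l (fun x => φ (g x)) := by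
  rw [tendstoInMeasure_iff_dist] at h ⊢
  intro ε hε
  obtain ⟨δ, hδ, hφδ⟩ := Metric.uniformContinuous_iff.1 hφ ε hε
  refine tendsto_of_tendsto_of_tendsto_of_le_of_le tendsto_const_nhds (h δ hδ)
    (fun _ => zero_le) fun i => measure_mono fun x (hx : ε ≤ _) =>
      show δ ≤ _ from not_lt.1 fun hlt => (hφδ hlt).not_ge hx

theorem tendstoInMeasure_of_forall_tendstoInMeasure_dist [PseudoMetricSpace E] [CompactSpace E]
    {l : Filter ι} {f : ι → α → E} {g : α → E}
    (h : ∀ q, TendstoInMeasure μ (fun i x => dist (f i x) q) l (fun x => dist (g x) q)) :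
    TendstoInMeasure μ f l g := by
  rw [tendstoInMeasure_iff_dist]
  intro ε hε
  obtain ⟨Q, -, hQfin, hQ⟩ :=
    (isCompact_univ (X := E)).finite_cover_balls (e := ε / 3) (by positivity)
  lift Q to Finset E using hQfin
  have hcover : ∀ i, {x | ε ≤ dist (f i x) (g x)} ⊆
      ⋃ q ∈ Q, {x | ε / 3 ≤ dist (dist (f i x) q) (dist (g x) q)} := by
    intro i x hx
    obtain ⟨q, hq, hgq⟩ := mem_iUnion₂.1 (hQ (mem_univ (g x)))
    have := dist_triangle_right (f i x) (g x) q
    rw [Metric.mem_ball] at hgq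
    simp only [mem_ofPred_eq] at hx
    refine mem_biUnion hq (show ε / 3 ≤ dist _ _ from ?_)
    rw [Real.dist_eq]
    exact (le_abs_self _).trans' (by linarith)
  have hsum := tendsto_finsetSum Q fun q _ => tendstoInMeasure_iff_dist.1 (h q) (ε / 3)
    (by positivity)
  rw [Finset.sum_const_zero] at hsum
  exact tendsto_of_tendsto_of_tendsto_of_le_of_le tendsto_const_nhds hsum
    (fun _ => zero_le) fun i => (measure_mono (hcover i)).trans (measure_biUnion_finset_le _ _)

theorem exists_strictMono_tendstoInMeasure [PseudoMetricSpace E] {f : ℕ → α → E} {g : α → E}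
    (h : ∀ ε > 0, ∃ᶠ n in atTop, μ {x | ε ≤ dist (f n x) (g x)} ≤ ENNReal.ofReal ε) :
    ∃ t : ℕ → ℕ, StrictMono t ∧ TendstoInMeasure μ (fun k => f (t k)) atTop g := by
  obtain ⟨t, ht, hbound⟩ := extraction_forall_of_frequently
    fun k : ℕ => h (1 / (k + 1)) Nat.one_div_pos_of_nat
  refine ⟨t, ht, tendstoInMeasure_iff_dist.2 fun ε hε => ?_⟩
  have hsmall : Tendsto (fun k : ℕ => ENNReal.ofReal (1 / (k + 1))) atTop (𝓝 0) := by
    simpa using ENNReal.tendsto_ofReal tendsto_one_div_add_atTop_nhds_zero_nat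
  refine tendsto_of_tendsto_of_tendsto_of_le_of_le' tendsto_const_nhds hsmall
    (Eventually.of_forall fun _ => zero_le) ?_
  filter_upwards [tendsto_one_div_add_atTop_nhds_zero_nat.eventually (gt_mem_nhds hε)] with k hk
  exact (measure_mono fun x (hx : ε ≤ _) => hk.le.trans hx).trans (hbound k)

theorem tendsto_eLpNorm_sub_of_tendstoInMeasure_of_nnnorm_le [IsFiniteMeasure μ]
    [NormedAddCommGroup E] {p : ℝ≥0∞} (hp : 1 ≤ p) (hp' : p ≠ ∞) {f : ℕ → α → E} {g : α → E}
    (hf : ∀ n, AEStronglyMeasurable (f n) μ) (hg : MemLp g p μ) {C : ℝ≥0}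
    (hC : ∀ n x, ‖f n x‖₊ ≤ C) (hfg : TendstoInMeasure μ f atTop g) :
    Tendsto (fun n => eLpNorm (f n - g) p μ) atTop (𝓝 0) := by
  refine tendsto_Lp_finite_of_tendstoInMeasure hp hp' hf hg
    (unifIntegrable_of hp hp' hf fun ε _ => ⟨C + 1, fun n => ?_⟩) hfg
  have hempty : {x | C + 1 ≤ ‖f n x‖₊} = ∅ :=
    eq_empty_of_forall_notMem fun x hx => (hC n x).not_gt (lt_of_lt_of_le (lt_add_one C) hx)
  simp [hempty]

end ConvergenceInMeasure

theorem exists_isCompact_tendstoUniformlyOn_of_ae_tendsto {α β : Type*} [TopologicalSpace α]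
    [MeasurableSpace α] [PseudoMetricSpace β] {μ : Measure α} [IsFiniteMeasure μ]
    [μ.InnerRegularCompactLTTop] {f : ℕ → α → β} {g : α → β}
    (hf : ∀ n, StronglyMeasurable (f n)) (hg : StronglyMeasurable g)
    (hfg : ∀ᵐ x ∂μ, Tendsto (fun n => f n x) atTop (𝓝 (g x))) {r : ℝ≥0∞} (hr : r < μ univ) :
    ∃ K, IsCompact K ∧ r < μ K ∧ TendstoUniformlyOn f g atTop K := by
  obtain ⟨ε, hε, hrε⟩ := ENNReal.lt_iff_exists_add_pos_lt.1 hr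
  obtain ⟨E, hEm, hEμ, hunif⟩ := tendstoUniformlyOn_of_ae_tendsto' hf hg hfg (ε := ε) hε
  have hEc : r < μ Eᶜ := by
    rw [measure_compl hEm (measure_ne_top μ E), lt_tsub_iff_right]
    calc r + μ E ≤ r + ε := by gcongr; simpa using hEμ
      _ < μ univ := hrε
  obtain ⟨K, hKE, hKc, hKμ⟩ := hEm.compl.exists_lt_isCompact_of_ne_top (measure_ne_top μ _) hEc
  exact ⟨K, hKc, hKμ, hunif.mono hKE⟩

/-- The `μ`-`A`-equicontinuity of the paper, for `A` the range of `a`. -/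
def IsMeasureEquicontinuous {X : Type*} [UniformSpace X] [MeasurableSpace X] (μ : Measure X)
    (T : X → X) (a : ℕ → ℕ) : Prop :=
  ∀ τ > (0 : ℝ), ∃ K, IsCompact K ∧ ENNReal.ofReal (1 - τ) < μ K ∧
    UniformEquicontinuousOn (fun n => T^[a n]) K

section CompactMetric

variable {X : Type*} [MetricSpace X] [CompactSpace X] [MeasurableSpace X] [BorelSpace X]
  {μ : Measure X} {T : X → X}

theorem tendstoInMeasure_id_of_tendsto_eLpNorm_comp_sub {ι : Type*} [IsFiniteMeasure μ]
    {l : Filter ι} {S : ι → X → X} (hS : ∀ i, Measurable (S i)) {p : ℝ≥0∞} (hp : p ≠ 0)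
    (h : ∀ f : X → ℝ, MemLp f p μ →
      Tendsto (fun i => eLpNorm (fun x => f (S i x) - f x) p μ) l (𝓝 0)) :
    TendstoInMeasure μ S l id := by
  refine tendstoInMeasure_of_forall_tendstoInMeasure_dist fun q => ?_
  have hq : Continuous fun x : X => dist x q := continuous_id.dist continuous_const
  have hmem : MemLp (fun x => dist x q) p μ :=
    hq.memLp_of_hasCompactSupport (HasCompactSupport.of_compactSpace _)
  exact tendstoInMeasure_of_tendsto_eLpNorm hp
    (fun i => (hq.measurable.comp (hS i)).aestronglyMeasurable) hq.aestronglyMeasurable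
    (by simpa only [Pi.sub_def, id] using h _ hmem)

theorem tendsto_eLpNorm_comp_sub_of_tendstoInMeasure [IsFiniteMeasure μ] {S : ℕ → X → X}
    (hS : ∀ n, MeasurePreserving (S n) μ μ) {p : ℝ≥0∞} (hp : 1 ≤ p) (hp' : p ≠ ∞)
    (h : TendstoInMeasure μ S atTop id) {f : X → ℝ} (hf : MemLp f p μ) :
    Tendsto (fun n => eLpNorm (fun x => f (S n x) - f x) p μ) atTop (𝓝 0) := by
  rw [ENNReal.tendsto_nhds_zero]
  intro ε hε
  obtain ⟨g, hfg, hg⟩ := hf.exists_boundedContinuous_eLpNorm_sub_le hp' (ε := ε / 3)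
    (ENNReal.div_pos hε.ne' (by norm_num)).ne'
  have hgS : ∀ n, AEStronglyMeasurable (fun x => g (S n x)) μ :=
    fun n => (g.continuous.measurable.comp (hS n).measurable).aestronglyMeasurable
  have hfgS : ∀ n, AEStronglyMeasurable ((f - ⇑g) ∘ S n) μ :=
    fun n => (hf.1.sub g.continuous.aestronglyMeasurable).comp_measurePreserving (hS n)
  have hg_lim : Tendsto (fun n => eLpNorm ((fun x => g (S n x)) - ⇑g) p μ) atTop (𝓝 0) :=
    tendsto_eLpNorm_sub_of_tendstoInMeasure_of_nnnorm_le hp hp' hgS hg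
      (fun n x => g.nnnorm_coe_le_nnnorm (S n x))
      ((CompactSpace.uniformContinuous_of_continuous g.continuous).comp_tendstoInMeasure h)
  filter_upwards [ENNReal.tendsto_nhds_zero.1 hg_lim (ε / 3)
    (ENNReal.div_pos hε.ne' (by norm_num))] with n hn
  have hsplit : (fun x => f (S n x) - f x) =
      (f - ⇑g) ∘ S n + ((fun x => g (S n x)) - ⇑g) - (f - ⇑g) := by
    ext x; simp only [Pi.sub_apply, Pi.add_apply, Function.comp_apply]; ring
  calc eLpNorm (fun x => f (S n x) - f x) p μ
      ≤ eLpNorm ((f - ⇑g) ∘ S n) p μ + eLpNorm ((fun x => g (S n x)) - ⇑g) p μ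
        + eLpNorm (f - ⇑g) p μ := by
        rw [hsplit]
        refine (eLpNorm_sub_le ((hfgS n).add ((hgS n).sub g.continuous.aestronglyMeasurable))
          (hf.1.sub g.continuous.aestronglyMeasurable) hp).trans ?_
        gcongr
        exact eLpNorm_add_le (hfgS n) ((hgS n).sub g.continuous.aestronglyMeasurable) hp
    _ ≤ ε / 3 + ε / 3 + ε / 3 := by
        rw [eLpNorm_comp_measurePreserving (hf.1.sub g.continuous.aestronglyMeasurable) (hS n)]
        gcongr
    _ = ε := ENNReal.add_thirds ε

omit [CompactSpace X] [BorelSpace X] in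
theorem isMeasureEquicontinuous_iff {a : ℕ → ℕ} :
    IsMeasureEquicontinuous μ T a ↔ ∀ τ > (0 : ℝ), ∃ K, IsCompact K ∧
      ENNReal.ofReal (1 - τ) < μ K ∧ ∀ ε > (0 : ℝ), ∃ δ > (0 : ℝ),
        ∀ x ∈ K, ∀ y ∈ K, dist x y < δ → ∀ n, dist (T^[a n] x) (T^[a n] y) < ε := by
  simp only [IsMeasureEquicontinuous, Metric.uniformEquicontinuousOn_iff]

theorem frequently_measure_dist_iterate_le_measure_compl (hT : MeasurePreserving T μ μ)
    (hTc : Continuous T) {a : ℕ → ℕ} (ha : StrictMono a) {K : Set X} (hK : IsCompact K)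
    (heq : UniformEquicontinuousOn (fun n => T^[a n]) K) {ε : ℝ} (hε : 0 < ε) :
    ∃ᶠ s in atTop, μ {x | ε ≤ dist (T^[s] x) x} ≤ μ Kᶜ := by
  obtain ⟨n₀, hn₀⟩ := heq.exists_frequently_dist_lt hK hε
  refine frequently_atTop.2 fun M => ?_
  obtain ⟨n, hn, hclose⟩ := frequently_atTop.1 hn₀ (a n₀ + M + 1)
  have hlt : a n₀ + M < a n := Nat.lt_of_succ_le hn |>.trans_le (ha.id_le n)
  refine ⟨a n - a n₀, by omega, ?_⟩
  -- pulled back by `T^[a n₀]`, the set lies off `K`, where `T^[a n]` and `T^[a n₀]` stay close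
  have hclosed : IsClosed {x | ε ≤ dist (T^[a n - a n₀] x) x} :=
    isClosed_le continuous_const ((hTc.iterate _).dist continuous_id)
  rw [← (hT.iterate (a n₀)).measure_preimage hclosed.measurableSet.nullMeasurableSet]
  refine measure_mono fun x (hx : ε ≤ _) hxK => (hclose x hxK).not_ge ?_
  rwa [← Function.iterate_add_apply, Nat.sub_add_cancel (by omega : a n₀ ≤ a n)] at hx

theorem IsMeasureEquicontinuous.exists_tendstoInMeasure_iterate [IsProbabilityMeasure μ]
    (hT : MeasurePreserving T μ μ) (hTc : Continuous T) {a : ℕ → ℕ} (ha : StrictMono a)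
    (h : IsMeasureEquicontinuous μ T a) :
    ∃ t : ℕ → ℕ, StrictMono t ∧ TendstoInMeasure μ (fun k => T^[t k]) atTop id := by
  refine exists_strictMono_tendstoInMeasure fun ε hε => ?_
  obtain ⟨K, hKc, hKμ, hK⟩ := h ε hε
  have hKcompl : μ Kᶜ ≤ ENNReal.ofReal ε := by
    rw [prob_compl_eq_one_sub hKc.measurableSet, tsub_le_iff_right]
    calc (1 : ℝ≥0∞) = ENNReal.ofReal (ε + (1 - ε)) := by simp
      _ ≤ ENNReal.ofReal ε + ENNReal.ofReal (1 - ε) := ENNReal.ofReal_add_le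
      _ ≤ ENNReal.ofReal ε + μ K := by gcongr
  exact (frequently_measure_dist_iterate_le_measure_compl hT hTc ha hKc hK hε).mono
    fun s hs => hs.trans hKcompl

theorem exists_isMeasureEquicontinuous_of_tendstoInMeasure_iterate [IsProbabilityMeasure μ]
    (hT : Continuous T) {t : ℕ → ℕ} (ht : StrictMono t)
    (h : TendstoInMeasure μ (fun k => T^[t k]) atTop id) :
    ∃ a : ℕ → ℕ, StrictMono a ∧ IsMeasureEquicontinuous μ T a := by
  obtain ⟨φ, hφ, hae⟩ := h.exists_seq_tendsto_ae
  refine ⟨t ∘ φ, ht.comp hφ, fun τ hτ => ?_⟩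
  obtain ⟨K, hKc, hKμ, hunif⟩ := exists_isCompact_tendstoUniformlyOn_of_ae_tendsto
    (fun n => (hT.iterate _).stronglyMeasurable) stronglyMeasurable_id hae
    (r := ENNReal.ofReal (1 - τ)) (by simpa using hτ)
  exact ⟨K, hKc, hKμ, hunif.uniformEquicontinuousOn
    (fun n => (CompactSpace.uniformContinuous_of_continuous (hT.iterate _)).uniformContinuousOn)
    uniformContinuous_id.uniformContinuousOn⟩

end CompactMetric

theorem stmt12 {X : Type*} [MetricSpace X] [CompactSpace X] [MeasurableSpace X]
    [BorelSpace X] (μ : Measure X) [IsProbabilityMeasure μ] (T : X ≃ₜ X)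
    (hT : MeasurePreserving T μ μ) :
    (∃ t : ℕ → ℕ, StrictMono t ∧ ∀ f : X → ℝ, MemLp f 2 μ →
      Tendsto (fun k => eLpNorm (fun x => f ((⇑T)^[t k] x) - f x) 2 μ)
        atTop (𝓝 0)) ↔
    (∃ a : ℕ → ℕ, StrictMono a ∧
      ∀ τ > (0 : ℝ), ∃ K : Set X, IsCompact K ∧
        μ K > ENNReal.ofReal (1 - τ) ∧ ∀ ε > (0 : ℝ), ∃ δ > (0 : ℝ),
        ∀ x ∈ K, ∀ y ∈ K, dist x y < δ →
          ∀ n : ℕ, dist ((⇑T)^[a n] x) ((⇑T)^[a n] y) < ε) := by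
  simp only [gt_iff_lt, ← isMeasureEquicontinuous_iff]
  constructor
  · rintro ⟨t, ht, hrigid⟩
    exact exists_isMeasureEquicontinuous_of_tendstoInMeasure_iterate T.continuous ht
      (tendstoInMeasure_id_of_tendsto_eLpNorm_comp_sub
        (fun k => (T.continuous.iterate _).measurable) two_ne_zero hrigid)
  · rintro ⟨a, ha, hequi⟩
    obtain ⟨t, ht, htend⟩ := hequi.exists_tendstoInMeasure_iterate hT T.continuous ha
    exact ⟨t, ht, fun f hf => tendsto_eLpNorm_comp_sub_of_tendstoInMeasure
      (fun k => hT.iterate _) one_le_two ENNReal.ofNat_ne_top htend hf⟩
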